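/- Let n > 3 be odd, let k be an even integer with 0 ≤ k ≤ (n−1)/2, and let M ∈ {0,…,(n−3)/2}. Define β_n^e(k;M) = R_n r_n [R_n(r_n² − 1)(cos(kθ_n) − 1) − sin(kθ_n)/tan((2M+1)θ_n)] and β̂_n^e(k;M) = R_n[2R_n r_n² cos(kθ_n) + sin(kθ_n)/sin((2M+1)θ_n)] + R_n²(1 + r_n⁴). Then every family {(p(a|s), ω_s^a)}_{s,a∈{0,1}} with p(a|s) ≥ 0, Σ_a p(a|s) = 1, ω_s^a ∈ Ω_n and Σ_a p(a|0)ω_0^a = Σ_a p(a|1)ω_1^a whose common barycenter Σ_a p(a|0)ω_0^a has first coordinate x lying in [r_n cos((2M+2)θ_n), r_n cos(2Mθ_n)] satisfies |C| ≤ 4(β_n^e(k;M)·x + β̂_n^e(k;M)) − 2, where C = 4(Σ_{s,a∈{0,1}} p(a|s)⟨Q_s^a, ω_s^a⟩ − 1). -/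

import Mathlib

noncomputable section

/-- Standard inner product on `ℝ³`. -/
def dot3 (v w : Fin 3 → ℝ) : ℝ := ∑ i, v i * w i

/-- The angle `θ_n = π / n`. -/
def thetaN (n : ℕ) : ℝ := Real.pi / n

/-- `r_n = (cos θ_n)^{-1/2}`. -/
def rN (n : ℕ) : ℝ := Real.sqrt (Real.cos (thetaN n))⁻¹

/-- `R_n = 1 / (1 + r_n²)`. -/
def RN (n : ℕ) : ℝ := 1 / (1 + rN n ^ 2)

/-- The pure states `ω_n(i)` of the regular polygon theory. -/
def omegaN (n i : ℕ) : Fin 3 → ℝ :=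
  ![rN n * Real.cos (2 * (i : ℝ) * thetaN n), rN n * Real.sin (2 * (i : ℝ) * thetaN n), 1]

/-- The state space `Ω_n`, the convex hull of the pure states. -/
def OmegaN (n : ℕ) : Set (Fin 3 → ℝ) :=
  convexHull ℝ {v | ∃ i < n, v = omegaN n i}

/-- The unit effect `u = (0,0,1)`. -/
def uEff : Fin 3 → ℝ := ![0, 0, 1]

/-- The pure effects `e_n(i)` (separate formulas for even and odd `n`). -/
def eN (n i : ℕ) : Fin 3 → ℝ :=
  if Even n then
    (1 / 2 : ℝ) • ![rN n * Real.cos ((2 * (i : ℝ) + 1) * thetaN n),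
                    rN n * Real.sin ((2 * (i : ℝ) + 1) * thetaN n), 1]
  else
    RN n • ![rN n * Real.cos (2 * (i : ℝ) * thetaN n),
             rN n * Real.sin (2 * (i : ℝ) * thetaN n), 1]

/-- The complementary effect `ē_n(i) = u - e_n(i)`. -/
def eBarN (n i : ℕ) : Fin 3 → ℝ := uEff - eN n i

/-- The effect space `E_n`. -/
def EffN (n : ℕ) : Set (Fin 3 → ℝ) :=
  {f | ∀ ω ∈ OmegaN n, dot3 f ω ∈ Set.Icc (0 : ℝ) 1}

/-- The positive cone `V_{n+}` generated by the state space. -/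
def VposN (n : ℕ) : Set (Fin 3 → ℝ) :=
  {x | ∃ c : ℝ, 0 ≤ c ∧ ∃ ω ∈ OmegaN n, x = c • ω}

/-- The dual cone `V*_{n+}` generated by the effect space. -/
def VdualN (n : ℕ) : Set (Fin 3 → ℝ) :=
  {x | ∃ c : ℝ, 0 ≤ c ∧ ∃ f ∈ EffN n, x = c • f}

/-- A state of `Ω_n ⊗_max Ω_n`, identified with a normalized cone-preserving linear map. -/
def IsState (n : ℕ) (η : (Fin 3 → ℝ) →ₗ[ℝ] (Fin 3 → ℝ)) : Prop :=
  (∀ x ∈ VdualN n, η x ∈ VposN n) ∧ dot3 uEff (η uEff) = 1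

/-- A binary observable on `Ω_n`: a pair of effects summing to the unit effect. -/
def IsObservable (n : ℕ) (A : (Fin 3 → ℝ) × (Fin 3 → ℝ)) : Prop :=
  A.1 ∈ EffN n ∧ A.2 ∈ EffN n ∧ A.1 + A.2 = uEff

/-- The observable `E_n(i) = (e_n(i), ē_n(i))`. -/
def EObs (n i : ℕ) : (Fin 3 → ℝ) × (Fin 3 → ℝ) := (eN n i, eBarN n i)

/-- The correlator `E(st) = Σ_{a,b} (-1)^{a+b} ⟨B^b, η(A^a)⟩`. -/
def corr (η : (Fin 3 → ℝ) →ₗ[ℝ] (Fin 3 → ℝ)) (A B : (Fin 3 → ℝ) × (Fin 3 → ℝ)) : ℝ :=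
  dot3 B.1 (η A.1) - dot3 B.2 (η A.1) - dot3 B.1 (η A.2) + dot3 B.2 (η A.2)

/-- The CHSH value `C[η; A₀,A₁; B₀,B₁] = E(00) + E(01) + E(10) - E(11)`. -/
def CHSH (η : (Fin 3 → ℝ) →ₗ[ℝ] (Fin 3 → ℝ))
    (A0 A1 B0 B1 : (Fin 3 → ℝ) × (Fin 3 → ℝ)) : ℝ :=
  corr η A0 B0 + corr η A0 B1 + corr η A1 B0 - corr η A1 B1

/-- `GL(Ω_n)`: linear bijections of `ℝ³` preserving the state space. -/
def GLOmega (n : ℕ) : Set ((Fin 3 → ℝ) →ₗ[ℝ] (Fin 3 → ℝ)) :=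
  {T | Function.Bijective T ∧ T '' OmegaN n = OmegaN n}

/-- The order isomorphism `T_n`: a rotation by `θ_n` for even `n`, the identity for odd `n`. -/
def TN (n : ℕ) : (Fin 3 → ℝ) →ₗ[ℝ] (Fin 3 → ℝ) :=
  if Even n then
    Matrix.toLin' !![Real.cos (thetaN n), Real.sin (thetaN n), 0;
                     -Real.sin (thetaN n), Real.cos (thetaN n), 0;
                     0, 0, 1]
  else LinearMap.id

/-- Maximally entangled states: elements of `T_n · GL(Ω_n)`. -/
def MaxEnt (n : ℕ) (η : (Fin 3 → ℝ) →ₗ[ℝ] (Fin 3 → ℝ)) : Prop :=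
  ∃ T ∈ GLOmega n, η = (TN n).comp T

/-- The effects `Q_s^a` in the rotated coordinates:
`Q₀⁰ = (R_n r_n cos kθ_n, 0, R_n)`, `Q₀¹ = (−R_n r_n cos kθ_n, 0, 1−R_n)`,
`Q₁⁰ = (0, R_n r_n sin kθ_n, ½)`, `Q₁¹ = (0, −R_n r_n sin kθ_n, ½)`. -/
def QQrot (n k : ℕ) : Fin 2 → Fin 2 → Fin 3 → ℝ :=
  ![![![RN n * rN n * Real.cos ((k : ℝ) * thetaN n), 0, RN n],
     ![-(RN n * rN n * Real.cos ((k : ℝ) * thetaN n)), 0, 1 - RN n]],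
    ![![0, RN n * rN n * Real.sin ((k : ℝ) * thetaN n), 1 / 2],
     ![0, -(RN n * rN n * Real.sin ((k : ℝ) * thetaN n)), 1 / 2]]]

/-- `β_n^e(k;M)`. -/
def betaE (n k M : ℕ) : ℝ :=
  RN n * rN n * (RN n * (rN n ^ 2 - 1) * (Real.cos ((k : ℝ) * thetaN n) - 1)
    - Real.sin ((k : ℝ) * thetaN n) / Real.tan ((2 * (M : ℝ) + 1) * thetaN n))

/-- `β̂_n^e(k;M)`. -/
def betaHatE (n k M : ℕ) : ℝ :=
  RN n * (2 * RN n * rN n ^ 2 * Real.cos ((k : ℝ) * thetaN n)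
    + Real.sin ((k : ℝ) * thetaN n) / Real.sin ((2 * (M : ℝ) + 1) * thetaN n))
    + RN n ^ 2 * (1 + rN n ^ 4)

/-! For each setting `s`, both effects `Q_s^0` and `Q_s^1` are dominated on `Ω_n` by a single
linear functional `ℓ_s`. On a vertex `ω_n(i)` this comes down, once `R_n (1 + r_n²) = 1` clears
the denominators, to `r_n² cos θ_n = 1` and `cos (m θ_n) ≤ cos θ_n` for odd `m` (the odd multiples
of `π / n` stay at least `θ_n` away from `2πℤ`); convexity extends it to `Ω_n`. Because
`Q_s^0 + Q_s^1 = u`, the row sum `Σ_a p(a|s) ⟨Q_s^a, ω_s^a⟩` then lies between `1 - ℓ_s(y)` and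
`ℓ_s(y)`, where `y` is the barycenter shared by both rows, and `ℓ_0(y) + ℓ_1(y)` is
`β_n^e(k;M) y₀ + β̂_n^e(k;M) + 1/2`. -/

open Real

lemma dot3_eq_dotProduct : dot3 = dotProduct := rfl

lemma uEff_dotProduct (v : Fin 3 → ℝ) : uEff ⬝ᵥ v = v 2 := by
  simp [uEff, dotProduct, Fin.sum_univ_three]

lemma dotProduct_le_of_mem_convexHull {ι : Type*} [Fintype ι] {s : Set (ι → ℝ)} {q b : ι → ℝ}
    (h : ∀ v ∈ s, q ⬝ᵥ v ≤ b ⬝ᵥ v) {v : ι → ℝ} (hv : v ∈ convexHull ℝ s) : q ⬝ᵥ v ≤ b ⬝ᵥ v := by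
  have hconv : Convex ℝ {v : ι → ℝ | (q - b) ⬝ᵥ v ≤ 0} :=
    convex_halfSpace_le ⟨dotProduct_add _, fun c v => dotProduct_smul c _ v⟩ 0
  simpa [sub_dotProduct] using
    convexHull_min (fun v hv => by simpa [sub_dotProduct] using h v hv) hconv hv

lemma sum_mul_dotProduct_mem_Icc_of_le {ι : Type*} [Fintype ι] {K : Set (ι → ℝ)}
    {Q : Fin 2 → ι → ℝ} {b : ι → ℝ} (hQ : ∀ ω ∈ K, (Q 0 + Q 1) ⬝ᵥ ω = 1)
    (hb : ∀ a, ∀ ω ∈ K, Q a ⬝ᵥ ω ≤ b ⬝ᵥ ω) {p : Fin 2 → ℝ} (hp : ∀ a, 0 ≤ p a)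
    (hps : ∑ a, p a = 1) {w : Fin 2 → ι → ℝ} (hw : ∀ a, w a ∈ K) :
    ∑ a, p a * (Q a ⬝ᵥ w a) ∈ Set.Icc (1 - b ⬝ᵥ ∑ a, p a • w a) (b ⬝ᵥ ∑ a, p a • w a) := by
  have h0 := hQ _ (hw 0)
  have h1 := hQ _ (hw 1)
  rw [add_dotProduct] at h0 h1
  have hb00 := mul_le_mul_of_nonneg_left (hb 0 _ (hw 0)) (hp 0)
  have hb10 := mul_le_mul_of_nonneg_left (hb 1 _ (hw 0)) (hp 0)
  have hb01 := mul_le_mul_of_nonneg_left (hb 0 _ (hw 1)) (hp 1)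
  have hb11 := mul_le_mul_of_nonneg_left (hb 1 _ (hw 1)) (hp 1)
  simp only [Fin.sum_univ_two, dotProduct_add, dotProduct_smul, smul_eq_mul] at hps ⊢
  constructor
  · linear_combination hb10 + hb01 - p 0 * h0 - p 1 * h1 - hps
  · linear_combination hb00 + hb11

lemma apply_two_eq_one_of_mem_OmegaN {n : ℕ} {ω : Fin 3 → ℝ} (hω : ω ∈ OmegaN n) : ω 2 = 1 :=
  convexHull_min (by rintro _ ⟨i, -, rfl⟩; rfl)
    (convex_hyperplane (LinearMap.proj (R := ℝ) (φ := fun _ : Fin 3 => ℝ) 2).isLinear 1) hω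

lemma cos_odd_mul_thetaN_le {n : ℕ} (hn : 0 < n) {m : ℤ} (hm : Odd m) :
    cos (m * thetaN n) ≤ cos (thetaN n) := by
  have hθ : 0 < thetaN n := div_pos pi_pos (by exact_mod_cast hn)
  have hnθ : (n : ℝ) * thetaN n = π := by unfold thetaN; field_simp
  -- reduce `m θ` modulo `2π` into `(-π, π]`; the result is `d θ` with `d` still odd
  set j := toIocDiv two_pi_pos (-π) (m * thetaN n)
  set d : ℤ := m - 2 * n * j
  have hdθ : (d : ℝ) * thetaN n = m * thetaN n - j • (2 * π) := by
    simp only [d, zsmul_eq_mul]; push_cast; rw [← hnθ]; ring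
  have hmem := toIocMod_mem_Ioc two_pi_pos (-π) (m * thetaN n)
  rw [← self_sub_toIocDiv_zsmul, ← hdθ] at hmem
  have hd : (1 : ℝ) ≤ |(d : ℝ)| := by
    have hdodd : Odd d := hm.sub_even ((even_two_mul _).mul_right _)
    exact_mod_cast Int.one_le_abs (by rintro h; simp [h] at hdodd)
  calc cos (m * thetaN n) = cos |d * thetaN n| := by
        rw [cos_abs, hdθ, zsmul_eq_mul, cos_sub_int_mul_two_pi]
    _ ≤ cos (thetaN n) := by
        refine cos_le_cos_of_nonneg_of_le_pi hθ.le
          (abs_le.2 ⟨by linarith [hmem.1], by linarith [hmem.2]⟩) ?_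
        rw [abs_mul, abs_of_pos hθ]
        nlinarith

lemma RN_mul_one_add_rN_sq (n : ℕ) : RN n * (1 + rN n ^ 2) = 1 :=
  one_div_mul_cancel (by positivity)

/-- The functionals `ℓ_s`. For `s = 0` it touches `Q₀⁰` at `ω_n(0)` and `Q₀¹` at the two vertices
next to `-ω_n(0)`; for `s = 1` it is the line through `ω_n(M)`, `ω_n(M+1)` supporting `Q₁⁰` (and
through their mirror images for `Q₁¹`). -/
def QQbound (n k M : ℕ) : Fin 2 → Fin 3 → ℝ :=
  ![![RN n ^ 2 * rN n * (rN n ^ 2 - 1) * (cos (k * thetaN n) - 1), 0,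
      2 * RN n ^ 2 * rN n ^ 2 * cos (k * thetaN n) + RN n ^ 2 * (1 + rN n ^ 4)],
    ![-(RN n * rN n * sin (k * thetaN n) * cos ((2 * M + 1) * thetaN n)
        / sin ((2 * M + 1) * thetaN n)), 0,
      RN n * sin (k * thetaN n) / sin ((2 * M + 1) * thetaN n) + 1 / 2]]

lemma QQbound_zero_add_one_dotProduct (n k M : ℕ) (y : Fin 3 → ℝ) :
    (QQbound n k M 0 + QQbound n k M 1) ⬝ᵥ y
      = betaE n k M * y 0 + (betaHatE n k M + 1 / 2) * y 2 := by
  simp only [dotProduct, Fin.sum_univ_three, QQbound, betaE, betaHatE, Pi.add_apply,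
    Matrix.cons_val_zero, Matrix.cons_val_one, Matrix.cons_val, Matrix.cons_val_fin_one,
    tan_eq_sin_div_cos, div_div_eq_mul_div]
  ring

lemma QQrot_zero_add_one (n k : ℕ) (s : Fin 2) : QQrot n k s 0 + QQrot n k s 1 = uEff := by
  fin_cases s <;> ext j <;> fin_cases j <;> norm_num [QQrot, uEff]

section Parameters

variable {n k M : ℕ}

lemma thetaN_pos (hn : 0 < n) : 0 < thetaN n := div_pos pi_pos (by exact_mod_cast hn)

lemma natCast_mul_thetaN (hn : 0 < n) : (n : ℝ) * thetaN n = π := by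
  unfold thetaN; field_simp

lemma cos_thetaN_pos (hn : 2 < n) : 0 < cos (thetaN n) := by
  apply cos_pos_of_mem_Ioo ⟨by linarith [thetaN_pos (n := n) (by omega), pi_pos], ?_⟩
  have h3 : (3 : ℝ) ≤ n := by exact_mod_cast hn
  rw [thetaN, div_lt_div_iff₀ (by linarith) two_pos]
  nlinarith [pi_pos]

lemma rN_sq_mul_cos_thetaN (hn : 2 < n) : rN n ^ 2 * cos (thetaN n) = 1 := by
  rw [rN, sq_sqrt (inv_nonneg.2 (cos_thetaN_pos hn).le), inv_mul_cancel₀ (cos_thetaN_pos hn).ne']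

lemma one_le_rN_sq (hn : 2 < n) : 1 ≤ rN n ^ 2 := by
  nlinarith [rN_sq_mul_cos_thetaN hn, cos_le_one (thetaN n), sq_nonneg (rN n)]

lemma natCast_mul_thetaN_le (hk : 2 * k + 1 ≤ n) : k * thetaN n ≤ π / 2 - thetaN n / 2 := by
  have h := mul_le_mul_of_nonneg_right (show ((2 * k + 1 : ℕ) : ℝ) ≤ n by exact_mod_cast hk)
    (thetaN_pos (n := n) (by omega)).le
  rw [natCast_mul_thetaN (by omega)] at h
  push_cast at h
  linarith

lemma cos_natCast_mul_thetaN_nonneg (hk : 2 * k + 1 ≤ n) : 0 ≤ cos (k * thetaN n) := by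
  apply cos_nonneg_of_mem_Icc ⟨?_, ?_⟩ <;>
    linarith [natCast_mul_thetaN_le hk, thetaN_pos (n := n) (by omega), pi_pos,
      mul_nonneg k.cast_nonneg (thetaN_pos (n := n) (by omega)).le]

lemma sin_natCast_mul_thetaN_nonneg (hk : 2 * k + 1 ≤ n) : 0 ≤ sin (k * thetaN n) := by
  apply sin_nonneg_of_nonneg_of_le_pi (mul_nonneg k.cast_nonneg (thetaN_pos (by omega)).le)
  linarith [natCast_mul_thetaN_le hk, thetaN_pos (n := n) (by omega), pi_pos]

-- `cos kθ ≥ cos (π/2 - θ/2) = sin (θ/2) ≥ sin² (θ/2)`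
lemma one_sub_cos_thetaN_le (hk : 2 * k + 1 ≤ n) :
    1 - cos (thetaN n) ≤ 2 * cos (k * thetaN n) := by
  have hθ := thetaN_pos (n := n) (by omega)
  have hkθ : 0 ≤ k * thetaN n := mul_nonneg k.cast_nonneg hθ.le
  have hsin : sin (thetaN n / 2) ≤ cos (k * thetaN n) := by
    rw [← cos_pi_div_two_sub]
    exact cos_le_cos_of_nonneg_of_le_pi hkθ (by linarith [pi_pos]) (natCast_mul_thetaN_le hk)
  have hsin_nonneg : 0 ≤ sin (thetaN n / 2) :=
    sin_nonneg_of_nonneg_of_le_pi (by linarith) (by linarith [natCast_mul_thetaN_le hk, pi_pos])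
  have hhalf : 1 - cos (thetaN n) = 2 * sin (thetaN n / 2) ^ 2 := by
    rw [sin_sq_eq_half_sub, mul_div_cancel₀ _ (two_ne_zero' ℝ)]; ring
  nlinarith [sin_le_one (thetaN n / 2)]

lemma sin_odd_mul_thetaN_pos (hM : 2 * M + 3 ≤ n) : 0 < sin ((2 * M + 1) * thetaN n) := by
  have hθ := thetaN_pos (n := n) (by omega)
  apply sin_pos_of_pos_of_lt_pi (by positivity)
  rw [← natCast_mul_thetaN (n := n) (by omega)]
  gcongr
  exact_mod_cast (by omega : 2 * M + 1 < n)

lemma neg_cos_thetaN_le_cos (hodd : Odd n) (i : ℕ) :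
    -cos (thetaN n) ≤ cos (2 * i * thetaN n) := by
  have h := cos_odd_mul_thetaN_le hodd.pos (m := 2 * i + n)
    ((even_two_mul (i : ℤ)).add_odd (by exact_mod_cast hodd))
  push_cast at h
  rw [add_mul, natCast_mul_thetaN hodd.pos, cos_add_pi] at h
  linarith

lemma QQrot_zero_dotProduct_omegaN_le (hodd : Odd n) (hn : 2 < n) (hk : 2 * k + 1 ≤ n)
    (a : Fin 2) (i : ℕ) : QQrot n k 0 a ⬝ᵥ omegaN n i ≤ QQbound n k M 0 ⬝ᵥ omegaN n i := by
  have hR := RN_mul_one_add_rN_sq n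
  have hr := one_le_rN_sq hn
  have hrθ := rN_sq_mul_cos_thetaN hn
  have hc := cos_natCast_mul_thetaN_nonneg hk
  have hck := one_sub_cos_thetaN_le hk
  have hu_le := cos_le_one (2 * i * thetaN n)
  have hu_ge := neg_cos_thetaN_le_cos hodd i
  set R := RN n
  set r := rN n
  set c := cos (k * thetaN n)
  set u := cos (2 * i * thetaN n)
  fin_cases a <;>
    simp only [dotProduct, Fin.sum_univ_three, QQrot, QQbound, omegaN, Fin.zero_eta, Fin.mk_one,
      Matrix.cons_val', Matrix.cons_val_zero, Matrix.cons_val_one, Matrix.cons_val, Matrix.cons_val_fin_one]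
  · have key : 0 ≤ R ^ 2 * r ^ 2 * (1 - u) * (2 * c + r ^ 2 - 1) := by
      have := sub_nonneg.2 hu_le
      have : 0 ≤ 2 * c + r ^ 2 - 1 := by linarith
      positivity
    linear_combination key - R * (r ^ 2 * c * u + 1) * hR
  · have key : 0 ≤ R ^ 2 * (r ^ 2 * u + 1) * (2 * r ^ 2 * c - r ^ 2 + 1) := by
      have : 0 ≤ r ^ 2 * u + 1 := by nlinarith
      have : 0 ≤ 2 * r ^ 2 * c - r ^ 2 + 1 := by nlinarith
      positivity
    linear_combination key - (R * r ^ 2 * (1 - u * c) + 1) * hR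

lemma QQrot_one_dotProduct_omegaN_le (hn : 2 < n) (hk : 2 * k + 1 ≤ n) (hM : 2 * M + 3 ≤ n)
    (a : Fin 2) (i : ℕ) : QQrot n k 1 a ⬝ᵥ omegaN n i ≤ QQbound n k M 1 ⬝ᵥ omegaN n i := by
  have hrθ := rN_sq_mul_cos_thetaN hn
  have hs := sin_natCast_mul_thetaN_nonneg hk
  have hsψ := sin_odd_mul_thetaN_pos hM
  have hsub := cos_odd_mul_thetaN_le (n := n) (by omega) (m := 2 * i - (2 * M + 1))
    ⟨i - M - 1, by ring⟩
  have hadd := cos_odd_mul_thetaN_le (n := n) (by omega) (m := 2 * i + (2 * M + 1)) ⟨i + M, by ring⟩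
  push_cast at hsub hadd
  rw [sub_mul, cos_sub] at hsub
  rw [add_mul, cos_add] at hadd
  have hdiv := mul_inv_cancel₀ hsψ.ne'
  set R := RN n
  set r := rN n
  set s := sin (k * thetaN n)
  set u := cos (2 * i * thetaN n)
  set v := sin (2 * i * thetaN n)
  set cψ := cos ((2 * M + 1) * thetaN n)
  set sψ := sin ((2 * M + 1) * thetaN n)
  have hR : 0 ≤ R := by unfold R RN; positivity
  fin_cases a <;>
    simp only [dotProduct, Fin.sum_univ_three, QQrot, QQbound, omegaN, Fin.zero_eta, Fin.mk_one,
      Matrix.cons_val', Matrix.cons_val_zero, Matrix.cons_val_one, Matrix.cons_val, Matrix.cons_val_fin_one]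
  · have key : 0 ≤ R * s / sψ * (1 - r ^ 2 * (u * cψ + v * sψ)) := by
      have : 0 ≤ 1 - r ^ 2 * (u * cψ + v * sψ) := by nlinarith
      positivity
    linear_combination key - R * s * r ^ 2 * v * hdiv
  · have key : 0 ≤ R * s / sψ * (1 - r ^ 2 * (u * cψ - v * sψ)) := by
      have : 0 ≤ 1 - r ^ 2 * (u * cψ - v * sψ) := by nlinarith
      positivity
    linear_combination key + R * s * r ^ 2 * v * hdiv

lemma QQrot_dotProduct_le_QQbound (hodd : Odd n) (hn : 2 < n) (hk : 2 * k + 1 ≤ n)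
    (hM : 2 * M + 3 ≤ n) (s a : Fin 2) {ω : Fin 3 → ℝ} (hω : ω ∈ OmegaN n) :
    QQrot n k s a ⬝ᵥ ω ≤ QQbound n k M s ⬝ᵥ ω := by
  refine dotProduct_le_of_mem_convexHull ?_ hω
  rintro _ ⟨i, -, rfl⟩
  fin_cases s
  · exact QQrot_zero_dotProduct_omegaN_le hodd hn hk a i
  · exact QQrot_one_dotProduct_omegaN_le hn hk hM a i

end Parameters

theorem CHSH_assemblage_bound_general (n : ℕ) (hodd : Odd n) (hn : 3 < n)
    (k : ℕ) (hk : k ≤ (n - 1) / 2) (M : ℕ) (hM : M ≤ (n - 3) / 2)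
    (p : Fin 2 → Fin 2 → ℝ) (w : Fin 2 → Fin 2 → Fin 3 → ℝ)
    (hp : ∀ s a, 0 ≤ p s a) (hps : ∀ s, ∑ a, p s a = 1)
    (hw : ∀ s a, w s a ∈ OmegaN n)
    (hbar : (∑ a, p 0 a • w 0 a) = (∑ a, p 1 a • w 1 a)) :
    |4 * ((∑ s, ∑ a, p s a * dot3 (QQrot n k s a) (w s a)) - 1)|
      ≤ 4 * (betaE n k M * ((∑ a, p 0 a • w 0 a) 0) + betaHatE n k M) - 2 := by
  obtain ⟨hn, hk, hM⟩ : 2 < n ∧ 2 * k + 1 ≤ n ∧ 2 * M + 3 ≤ n := by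
    obtain ⟨t, rfl⟩ := hodd; omega
  set y := ∑ a, p 0 a • w 0 a
  have hy : y 2 = 1 := apply_two_eq_one_of_mem_OmegaN
    ((convex_convexHull ℝ _).sum_mem (fun a _ => hp 0 a) (hps 0) (fun a _ => hw 0 a))
  have hrow (s : Fin 2) : ∑ a, p s a * (QQrot n k s a ⬝ᵥ w s a)
      ∈ Set.Icc (1 - QQbound n k M s ⬝ᵥ y) (QQbound n k M s ⬝ᵥ y) := by
    have hys : y = ∑ a, p s a • w s a := by fin_cases s; exacts [rfl, hbar]
    rw [hys]
    refine sum_mul_dotProduct_mem_Icc_of_le (fun ω hω => ?_)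
      (fun a ω hω => QQrot_dotProduct_le_QQbound hodd hn hk hM s a hω) (hp s) (hps s) (hw s)
    rw [QQrot_zero_add_one, uEff_dotProduct, apply_two_eq_one_of_mem_OmegaN hω]
  have hsum := QQbound_zero_add_one_dotProduct n k M y
  rw [add_dotProduct, hy, mul_one] at hsum
  simp only [dot3_eq_dotProduct, Fin.sum_univ_two] at hrow ⊢
  rw [abs_le]
  constructor <;> linarith [(hrow 0).1, (hrow 0).2, (hrow 1).1, (hrow 1).2]

/-- the CHSH value of any assemblage pair whose common barycenter has
first coordinate `x ∈ [r_n cos((2M+2)θ_n), r_n cos(2Mθ_n)]` satisfies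
`|C| ≤ 4(β_n^e(k;M)·x + β̂_n^e(k;M)) − 2`. -/
theorem CHSH_assemblage_bound (n : ℕ) (hodd : Odd n) (hn : 3 < n)
    (k : ℕ) (hke : Even k) (hk : k ≤ (n - 1) / 2) (M : ℕ) (hM : M ≤ (n - 3) / 2)
    (p : Fin 2 → Fin 2 → ℝ) (w : Fin 2 → Fin 2 → Fin 3 → ℝ)
    (hp : ∀ s a, 0 ≤ p s a) (hps : ∀ s, ∑ a, p s a = 1)
    (hw : ∀ s a, w s a ∈ OmegaN n)
    (hbar : (∑ a, p 0 a • w 0 a) = (∑ a, p 1 a • w 1 a))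
    (hx : (∑ a, p 0 a • w 0 a) 0 ∈
      Set.Icc (rN n * Real.cos ((2 * (M : ℝ) + 2) * thetaN n))
              (rN n * Real.cos (2 * (M : ℝ) * thetaN n))) :
    |4 * ((∑ s, ∑ a, p s a * dot3 (QQrot n k s a) (w s a)) - 1)|
      ≤ 4 * (betaE n k M * ((∑ a, p 0 a • w 0 a) 0) + betaHatE n k M) - 2 :=
  CHSH_assemblage_bound_general n hodd hn k hk M hM p w hp hps hw hbar
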